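/- Let û ∈ U be a minimizer of L^TV over U. Suppose (approximation assumption) there exists ψ ∈ V with ‖ψ − û‖_{H¹(ρ)} ≤ A for some A ≥ 0, and suppose (quadrature assumption) for the i.i.d. sample x₁,…,x_N ∼ ρ there is an event E of probability at least 1−ε on which sup_{φ∈V} |L^TV(φ) − L^TV_N(φ)| ≤ Q for some Q ≥ 0. Then, on the event E, every δ-minimizer φ̂^N of L^TV_N over V satisfies 0 ≤ L^TV(φ̂^N) − L^TV(û) ≤ (λ+1)·A + 2Q + 2δ; in particular this bound holds with probability at least 1−ε over the choice of the sample. -/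

import Mathlib

open MeasureTheory

noncomputable section

/-- Frobenius norm of a `d × n` array of real numbers. -/
def frobNorm {d n : ℕ} (M : Fin d → Fin n → ℝ) : ℝ :=
  Real.sqrt (∑ j, ∑ i, (M j i) ^ 2)

/-- The Jacobian of `u : ℝᵈ → ℝⁿ` at `x`. -/
def jacobian {d n : ℕ} (u : EuclideanSpace ℝ (Fin d) → EuclideanSpace ℝ (Fin n))
    (x : EuclideanSpace ℝ (Fin d)) : Fin d → Fin n → ℝ :=
  fun j i => fderiv ℝ u x (EuclideanSpace.single j 1) i

/-- The TV-regularized expected loss `L^TV(u) = E_ρ[D(u(x), y(x)) + |∇u(x)|]`. -/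
def LTV {d n : ℕ} (ρ : Measure (EuclideanSpace ℝ (Fin d)))
    (D : EuclideanSpace ℝ (Fin n) → EuclideanSpace ℝ (Fin n) → ℝ)
    (y : EuclideanSpace ℝ (Fin d) → EuclideanSpace ℝ (Fin n))
    (u : EuclideanSpace ℝ (Fin d) → EuclideanSpace ℝ (Fin n)) : ℝ :=
  ∫ x, (D (u x) (y x) + frobNorm (jacobian u x)) ∂ρ

/-- The empirical TV-regularized loss built from the sample points `xs`. -/
def LTVN {d n N : ℕ} (xs : Fin N → EuclideanSpace ℝ (Fin d))
    (D : EuclideanSpace ℝ (Fin n) → EuclideanSpace ℝ (Fin n) → ℝ)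
    (y : EuclideanSpace ℝ (Fin d) → EuclideanSpace ℝ (Fin n))
    (φ : EuclideanSpace ℝ (Fin d) → EuclideanSpace ℝ (Fin n)) : ℝ :=
  (N : ℝ)⁻¹ * ∑ i, (D (φ (xs i)) (y (xs i)) + frobNorm (jacobian φ (xs i)))

/-- Squared weighted `H¹(ρ)` distance: `E_ρ[|u-v|² + |∇u-∇v|²]`. -/
def H1distSq {d n : ℕ} (ρ : Measure (EuclideanSpace ℝ (Fin d)))
    (u v : EuclideanSpace ℝ (Fin d) → EuclideanSpace ℝ (Fin n)) : ℝ :=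
  ∫ x, (‖u x - v x‖ ^ 2 + (frobNorm (jacobian u x - jacobian v x)) ^ 2) ∂ρ

lemma frobNorm_eq_norm {d n : ℕ} (M : Fin d → Fin n → ℝ) :
    frobNorm M = ‖(WithLp.toLp 2 (fun p : Fin d × Fin n => M p.1 p.2) : EuclideanSpace ℝ (Fin d × Fin n))‖ := by
  rw [EuclideanSpace.norm_eq, frobNorm, Fintype.sum_prod_type]
  simp [Real.norm_eq_abs, sq_abs]

lemma frobNorm_nonneg {d n : ℕ} (M : Fin d → Fin n → ℝ) : 0 ≤ frobNorm M :=
  Real.sqrt_nonneg _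

lemma abs_frobNorm_sub_frobNorm {d n : ℕ} (M N : Fin d → Fin n → ℝ) :
    |frobNorm M - frobNorm N| ≤ frobNorm (M - N) := by
  rw [frobNorm_eq_norm, frobNorm_eq_norm, frobNorm_eq_norm]
  have : (WithLp.toLp 2 (fun p : Fin d × Fin n => (M - N) p.1 p.2) : EuclideanSpace ℝ (Fin d × Fin n))
      = (WithLp.toLp 2 (fun p : Fin d × Fin n => M p.1 p.2) : EuclideanSpace ℝ (Fin d × Fin n))
        - (WithLp.toLp 2 (fun p : Fin d × Fin n => N p.1 p.2) : EuclideanSpace ℝ (Fin d × Fin n)) := rfl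
  rw [this]
  exact abs_norm_sub_norm_le _ _

lemma integral_le_sqrt_integral_sq {α : Type*} [MeasurableSpace α] (μ : Measure α)
    [IsProbabilityMeasure μ] (f : α → ℝ) (hf : Integrable f μ)
    (hf2 : Integrable (fun x => f x ^ 2) μ) :
    ∫ x, f x ∂μ ≤ Real.sqrt (∫ x, f x ^ 2 ∂μ) := by
  have hm : MemLp f 2 μ := (memLp_two_iff_integrable_sq hf.aestronglyMeasurable).2 hf2
  have hv := ProbabilityTheory.variance_nonneg f μ
  rw [ProbabilityTheory.variance_eq_sub hm] at hv
  calc ∫ x, f x ∂μ ≤ |∫ x, f x ∂μ| := le_abs_self _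
    _ = Real.sqrt ((∫ x, f x ∂μ) ^ 2) := (Real.sqrt_sq_eq_abs _).symm
    _ ≤ Real.sqrt (∫ x, f x ^ 2 ∂μ) := Real.sqrt_le_sqrt (by
        simpa using hv)

lemma measurable_jac_entry {d n : ℕ} (u : EuclideanSpace ℝ (Fin d) → EuclideanSpace ℝ (Fin n))
    (j : Fin d) (i : Fin n) : Measurable fun x => jacobian u x j i := by
  exact (EuclideanSpace.proj i).continuous.measurable.comp
    (measurable_fderiv_apply_const ℝ u (EuclideanSpace.single j 1))

lemma measurable_frob_jac_sub {d n : ℕ}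
    (u v : EuclideanSpace ℝ (Fin d) → EuclideanSpace ℝ (Fin n)) :
    Measurable fun x => frobNorm (jacobian u x - jacobian v x) := by
  apply Measurable.sqrt
  apply Finset.measurable_sum
  intro j _
  apply Finset.measurable_sum
  intro i _
  have : Measurable fun x => jacobian u x j i - jacobian v x j i :=
    (measurable_jac_entry u j i).sub (measurable_jac_entry v j i)
  exact this.pow_const 2

theorem stmt1 {d n : ℕ}
    (Ω : Set (EuclideanSpace ℝ (Fin d)))
    (ρ : Measure (EuclideanSpace ℝ (Fin d))) [IsProbabilityMeasure ρ]
    (hρΩ : ρ Ωᶜ = 0)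
    (y : EuclideanSpace ℝ (Fin d) → EuclideanSpace ℝ (Fin n)) (hy : Measurable y)
    (D : EuclideanSpace ℝ (Fin n) → EuclideanSpace ℝ (Fin n) → ℝ)
    (lam : ℝ) (hlam : 0 < lam)
    (hLip : ∀ u₁ u₂ w, |D u₁ w - D u₂ w| ≤ lam * ‖u₁ - u₂‖)
    (U V : Set (EuclideanSpace ℝ (Fin d) → EuclideanSpace ℝ (Fin n)))
    (hVU : V ⊆ U) (hUdiff : ∀ u ∈ U, Differentiable ℝ u)
    -- all expectations appearing are assumed finite
    (hIntD : ∀ u ∈ U, Integrable (fun x => D (u x) (y x) + frobNorm (jacobian u x)) ρ)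
    (hIntH : ∀ u ∈ U, ∀ v ∈ U,
      Integrable (fun x => ‖u x - v x‖ ^ 2 + (frobNorm (jacobian u x - jacobian v x)) ^ 2) ρ)
    -- `û` is a minimizer of `L^TV` over `U`
    (uhat : EuclideanSpace ℝ (Fin d) → EuclideanSpace ℝ (Fin n))
    (huhatU : uhat ∈ U) (huhatMin : ∀ u ∈ U, LTV ρ D y uhat ≤ LTV ρ D y u)
    -- approximation assumption: some `ψ ∈ V` is `A`-close to `û` in `H¹(ρ)`
    (A : ℝ) (hA : 0 ≤ A)
    (happrox : ∃ ψ ∈ V, Real.sqrt (H1distSq ρ ψ uhat) ≤ A)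
    -- quadrature assumption: on an event `E` of i.i.d. samples of probability at least
    -- `1 - ε`, the empirical loss is uniformly `Q`-close to the expected loss on `V`
    (N : ℕ) (hN : 0 < N) (ε : ℝ) (hε : 0 < ε) (hε1 : ε < 1)
    (Q : ℝ) (hQ : 0 ≤ Q)
    (E : Set (Fin N → EuclideanSpace ℝ (Fin d)))
    (hEprob : ENNReal.ofReal (1 - ε) ≤ Measure.pi (fun _ : Fin N => ρ) E)
    (hEquad : ∀ xs ∈ E, ∀ φ ∈ V, |LTV ρ D y φ - LTVN xs D y φ| ≤ Q)
    (δ : ℝ) (hδ : 0 ≤ δ) :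
    -- on the event `E`, every `δ`-minimizer of the empirical loss over `V`
    -- satisfies the generalization bound …
    (∀ xs ∈ E, ∀ φN ∈ V, (∀ φ ∈ V, LTVN xs D y φN ≤ LTVN xs D y φ + δ) →
        0 ≤ LTV ρ D y φN - LTV ρ D y uhat ∧
          LTV ρ D y φN - LTV ρ D y uhat ≤ (lam + 1) * A + 2 * Q + 2 * δ) ∧
    -- … and in particular the bound holds with probability at least `1 - ε`
    ENNReal.ofReal (1 - ε) ≤ Measure.pi (fun _ : Fin N => ρ)
      {xs | ∀ φN ∈ V, (∀ φ ∈ V, LTVN xs D y φN ≤ LTVN xs D y φ + δ) →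
        0 ≤ LTV ρ D y φN - LTV ρ D y uhat ∧
          LTV ρ D y φN - LTV ρ D y uhat ≤ (lam + 1) * A + 2 * Q + 2 * δ} := by
  obtain ⟨ψ, hψV, hψA⟩ := happrox
  have hψU : ψ ∈ U := hVU hψV
  set D1 : EuclideanSpace ℝ (Fin d) → ℝ := fun x => ‖ψ x - uhat x‖ with hD1
  set D2 : EuclideanSpace ℝ (Fin d) → ℝ :=
    fun x => frobNorm (jacobian ψ x - jacobian uhat x) with hD2
  have hm1 : Measurable D1 :=
    (((hUdiff ψ hψU).continuous.sub (hUdiff uhat huhatU).continuous).norm).measurable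
  have hm2 : Measurable D2 := measurable_frob_jac_sub ψ uhat
  have hsum : Integrable (fun x => D1 x ^ 2 + D2 x ^ 2) ρ := hIntH ψ hψU uhat huhatU
  have hsq1 : Integrable (fun x => D1 x ^ 2) ρ := by
    refine hsum.mono' ((hm1.pow_const 2).aestronglyMeasurable) ?_
    filter_upwards with x
    rw [Real.norm_eq_abs, abs_of_nonneg (sq_nonneg _)]
    nlinarith [sq_nonneg (D2 x)]
  have hsq2 : Integrable (fun x => D2 x ^ 2) ρ := by
    refine hsum.mono' ((hm2.pow_const 2).aestronglyMeasurable) ?_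
    filter_upwards with x
    rw [Real.norm_eq_abs, abs_of_nonneg (sq_nonneg _)]
    nlinarith [sq_nonneg (D1 x)]
  have hd1nn : ∀ x, 0 ≤ D1 x := fun x => norm_nonneg _
  have hd2nn : ∀ x, 0 ≤ D2 x := fun x => frobNorm_nonneg _
  have hint1 : Integrable D1 ρ := by
    refine ((integrable_const (1 : ℝ)).add hsq1).mono' hm1.aestronglyMeasurable ?_
    filter_upwards with x
    rw [Real.norm_eq_abs, abs_of_nonneg (hd1nn x)]
    simp only [Pi.add_apply]
    nlinarith [sq_nonneg (D1 x - 1)]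
  have hint2 : Integrable D2 ρ := by
    refine ((integrable_const (1 : ℝ)).add hsq2).mono' hm2.aestronglyMeasurable ?_
    filter_upwards with x
    rw [Real.norm_eq_abs, abs_of_nonneg (hd2nn x)]
    simp only [Pi.add_apply]
    nlinarith [sq_nonneg (D2 x - 1)]
  have hsqle : Real.sqrt (H1distSq ρ ψ uhat) ≤ A := hψA
  have hE1 : ∫ x, D1 x ∂ρ ≤ A := by
    calc ∫ x, D1 x ∂ρ ≤ Real.sqrt (∫ x, D1 x ^ 2 ∂ρ) :=
          integral_le_sqrt_integral_sq ρ D1 hint1 hsq1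
      _ ≤ Real.sqrt (∫ x, (D1 x ^ 2 + D2 x ^ 2) ∂ρ) := by
          refine Real.sqrt_le_sqrt (integral_mono hsq1 hsum fun x => ?_)
          nlinarith [sq_nonneg (D2 x)]
      _ ≤ A := hsqle
  have hE2 : ∫ x, D2 x ∂ρ ≤ A := by
    calc ∫ x, D2 x ∂ρ ≤ Real.sqrt (∫ x, D2 x ^ 2 ∂ρ) :=
          integral_le_sqrt_integral_sq ρ D2 hint2 hsq2
      _ ≤ Real.sqrt (∫ x, (D1 x ^ 2 + D2 x ^ 2) ∂ρ) := by
          refine Real.sqrt_le_sqrt (integral_mono hsq2 hsum fun x => ?_)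
          nlinarith [sq_nonneg (D1 x)]
      _ ≤ A := hsqle
  have hiψ := hIntD ψ hψU
  have hiu := hIntD uhat huhatU
  have hkey : LTV ρ D y ψ ≤ LTV ρ D y uhat + (lam + 1) * A := by
    have hsub : LTV ρ D y ψ - LTV ρ D y uhat
        = ∫ x, ((D (ψ x) (y x) + frobNorm (jacobian ψ x))
            - (D (uhat x) (y x) + frobNorm (jacobian uhat x))) ∂ρ :=
      (integral_sub hiψ hiu).symm
    have hb : ∫ x, ((D (ψ x) (y x) + frobNorm (jacobian ψ x))
            - (D (uhat x) (y x) + frobNorm (jacobian uhat x))) ∂ρ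
        ≤ ∫ x, (lam * D1 x + D2 x) ∂ρ := by
      refine integral_mono (hiψ.sub hiu) ((hint1.const_mul lam).add hint2) fun x => ?_
      have h1 := abs_le.1 (hLip (ψ x) (uhat x) (y x))
      have h2 := abs_le.1 (abs_frobNorm_sub_frobNorm (jacobian ψ x) (jacobian uhat x))
      show _ ≤ lam * D1 x + D2 x
      simp only [hD1, hD2]
      linarith [h1.2, h2.2]
    have hadd : ∫ x, (lam * D1 x + D2 x) ∂ρ = lam * ∫ x, D1 x ∂ρ + ∫ x, D2 x ∂ρ := by
      rw [integral_add (hint1.const_mul lam) hint2, integral_const_mul]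
    have hmul : lam * ∫ x, D1 x ∂ρ ≤ lam * A := mul_le_mul_of_nonneg_left hE1 hlam.le
    nlinarith
  have hmain : ∀ xs ∈ E, ∀ φN ∈ V, (∀ φ ∈ V, LTVN xs D y φN ≤ LTVN xs D y φ + δ) →
      0 ≤ LTV ρ D y φN - LTV ρ D y uhat ∧
        LTV ρ D y φN - LTV ρ D y uhat ≤ (lam + 1) * A + 2 * Q + 2 * δ := by
    intro xs hxs φN hφN hmin
    have hlow : LTV ρ D y uhat ≤ LTV ρ D y φN := huhatMin φN (hVU hφN)
    have q1 := abs_le.1 (hEquad xs hxs φN hφN)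
    have q2 := abs_le.1 (hEquad xs hxs ψ hψV)
    have hδψ := hmin ψ hψV
    exact ⟨by linarith, by linarith [q1.1, q1.2, q2.1, q2.2]⟩
  refine ⟨hmain, le_trans hEprob (measure_mono fun xs hxs => ?_)⟩
  exact fun φN hφN hminim => hmain xs hxs φN hφN hminim
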